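/- arXiv:1807.05420 — 2 statements merged into one kernel-verified Lean document; each statement's English description precedes it below -/
import Mathlib

section
/- Assume μ satisfies Dalang's condition ∫_{ℝ^d} (1+|ξ|²)^{−1} μ(dξ) < ∞. Then for every t > 0 and every γ > 0, the series H̃(t;γ) := ∑_{n≥0} √(γ^n h_n(t)) converges, i.e. H̃(t;γ) < ∞. -/
open MeasureTheory Real ENNReal

/-- `k(t) = ∫_{ℝ^d} e^{-t |ξ|²} μ(dξ)`. -/
noncomputable def heatK {d : ℕ} (μ : Measure (EuclideanSpace ℝ (Fin d))) (t : ℝ) : ℝ≥0∞ :=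
  ∫⁻ ξ, ENNReal.ofReal (Real.exp (-t * ‖ξ‖ ^ 2)) ∂μ

/-- `h_0(t) = 1` and, for `n = m + 1 ≥ 1`,
`h_n(t) = ∫_{0 < t_1 < ⋯ < t_n < t} k(t_2 - t_1) ⋯ k(t_n - t_{n-1}) k(t - t_n) dt_1 ⋯ dt_n`. -/
noncomputable def hSeq {d : ℕ} (μ : Measure (EuclideanSpace ℝ (Fin d))) : ℕ → ℝ → ℝ≥0∞
  | 0, _ => 1
  | (m + 1), t =>
    ∫⁻ s in {s : Fin (m + 1) → ℝ | StrictMono s ∧ 0 < s 0 ∧ s (Fin.last m) < t},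
      (∏ j : Fin m, heatK μ (s j.succ - s j.castSucc)) * heatK μ (t - s (Fin.last m))

/-!
Write `s₀ < ⋯ < sₘ` for the integration variables of `h_{m+1}(t)` and `u = (s₁ - s₀, …, t - sₘ)`
for their gaps; `s ↦ u` is affine with determinant `±1`. For `λ ≥ 0` the weights `e^{-λ uⱼ}`
multiply to `e^{-λ (t - s₀)} ≥ e^{-λ t}`, so the change of variables gives
`h_n(t) ≤ e^{λ t} K(λ)^n` with `K(λ) = ∫₀^∞ e^{-λ v} k(v) dv = ∫ (λ + |ξ|²)⁻¹ μ(dξ)` (Tonelli).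
Dalang's condition makes `K(λ) → 0` by dominated convergence, so for `λ` large `γ K(λ) < 1` and
`∑ √(γⁿ hₙ(t))` is dominated by a convergent geometric series.
-/

open Set Filter Topology

theorem MeasureTheory.sigmaFinite_of_lintegral_ne_top {α : Type*} [MeasurableSpace α]
    {μ : Measure α} {f : α → ℝ≥0∞} (hf : AEMeasurable f μ) (hf_ne_zero : ∀ᵐ x ∂μ, f x ≠ 0)
    (hf_int : ∫⁻ x, f x ∂μ ≠ ∞) : SigmaFinite μ := by
  have : IsFiniteMeasure (μ.withDensity f) := isFiniteMeasure_withDensity hf_int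
  rw [← withDensity_inv_same₀ hf hf_ne_zero ((ae_lt_top' hf hf_int).mono fun _ => ne_of_lt)]
  exact SigmaFinite.withDensity_of_ne_top <| (withDensity_absolutelyContinuous μ f).ae_le <|
    hf_ne_zero.mono fun _ => ENNReal.inv_ne_top.2

theorem MeasureTheory.lintegral_pi_prod_eq_pow {α : Type*} [MeasurableSpace α] (μ : Measure α)
    [SigmaFinite μ] {f : α → ℝ≥0∞} (hf : Measurable f) (n : ℕ) :
    ∫⁻ u, ∏ j, f (u j) ∂Measure.pi (fun _ : Fin n => μ) = (∫⁻ a, f a ∂μ) ^ n := by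
  induction n with
  | zero => simp
  | succ n ih =>
    set e := MeasurableEquiv.piFinSuccAbove (fun _ : Fin (n + 1) => α) 0
    calc ∫⁻ u, ∏ j, f (u j) ∂Measure.pi (fun _ => μ)
        = ∫⁻ u, f (e u).1 * ∏ j, f ((e u).2 j) ∂Measure.pi (fun _ => μ) :=
          lintegral_congr fun u => by simp [e, Fin.prod_univ_succ, Fin.tail]
      _ = ∫⁻ p, f p.1 * ∏ j, f (p.2 j) ∂μ.prod (Measure.pi fun _ => μ) :=
          (measurePreserving_piFinSuccAbove (fun _ => μ) 0).lintegral_comp_emb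
            e.measurableEmbedding (fun p => f p.1 * ∏ j, f (p.2 j))
      _ = (∫⁻ a, f a ∂μ) ^ (n + 1) := by
          rw [lintegral_prod_mul (g := fun v : Fin n → α => ∏ j, f (v j)) hf.aemeasurable
            (Finset.measurable_prod _ fun j _ => hf.comp (measurable_pi_apply j)).aemeasurable, ih,
            pow_succ']

theorem lintegral_Ioi_exp_neg_mul {b : ℝ} (hb : 0 < b) :
    ∫⁻ v in Ioi 0, ENNReal.ofReal (Real.exp (-b * v)) = ENNReal.ofReal b⁻¹ := by
  rw [← ofReal_integral_eq_lintegral_ofReal (integrableOn_exp_mul_Ioi (by linarith) 0)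
    (ae_of_all _ fun _ => (Real.exp_pos _).le), integral_exp_mul_Ioi (by linarith) 0]
  congr 1
  simp

section Gaps

variable {n : ℕ}

def gaps (t : ℝ) (s : Fin n → ℝ) : Fin n → ℝ :=
  fun j => Fin.snoc (α := fun _ => ℝ) s t j.succ - Fin.snoc (α := fun _ => ℝ) s t j.castSucc

@[simp]
theorem gaps_castSucc (t : ℝ) (s : Fin (n + 1) → ℝ) (j : Fin n) :
    gaps t s j.castSucc = s j.succ - s j.castSucc := by
  simp only [gaps, Fin.succ_castSucc, Fin.snoc_castSucc]

@[simp]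
theorem gaps_last (t : ℝ) (s : Fin (n + 1) → ℝ) : gaps t s (Fin.last n) = t - s (Fin.last n) := by
  simp [gaps]

theorem sum_gaps (t : ℝ) (s : Fin (n + 1) → ℝ) : ∑ j, gaps t s j = t - s 0 := by
  have h := Fin.sum_univ_succ (Fin.snoc (α := fun _ => ℝ) s t)
  have h' := Fin.sum_univ_castSucc (Fin.snoc (α := fun _ => ℝ) s t)
  rw [← Fin.castSucc_zero, Fin.snoc_castSucc] at h
  simp only [Fin.snoc_castSucc, Fin.snoc_last] at h'
  simp only [gaps, Finset.sum_sub_distrib, Fin.snoc_castSucc]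
  linarith

theorem gaps_pos {t : ℝ} {s : Fin (n + 1) → ℝ} (hs : StrictMono s) (ht : s (Fin.last n) < t)
    (j : Fin (n + 1)) : 0 < gaps t s j := by
  have := Fin.strictMono_insertNth_last hs t ht
  rw [Fin.insertNth_last'] at this
  exact sub_pos.2 (this j.castSucc_lt_succ)

theorem gaps_eq_gaps_zero_add (t : ℝ) (s : Fin (n + 1) → ℝ) :
    gaps t s = gaps 0 s + Pi.single (Fin.last n) t := by
  ext j
  cases j using Fin.lastCases <;> simp [Fin.castSucc_ne_last, sub_eq_neg_add]

def gapsLinearMap (n : ℕ) : (Fin (n + 1) → ℝ) →ₗ[ℝ] Fin (n + 1) → ℝ where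
  toFun := gaps 0
  map_add' s s' := by
    ext j
    cases j using Fin.lastCases <;> simp <;> ring
  map_smul' c s := by
    ext j
    cases j using Fin.lastCases <;> simp; ring

theorem det_gapsLinearMap (n : ℕ) : LinearMap.det (gapsLinearMap n) = (-1) ^ (n + 1) := by
  rw [← LinearMap.det_toMatrix']
  have htri : (LinearMap.toMatrix' (gapsLinearMap n)).BlockTriangular id := by
    intro i j (hji : j < i)
    simp only [LinearMap.toMatrix'_apply, gapsLinearMap, LinearMap.coe_mk, AddHom.coe_mk]
    cases i using Fin.lastCases with
    | last => simp [Pi.single_eq_of_ne hji.ne']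
    | cast k =>
      rw [gaps_castSucc, Pi.single_eq_of_ne (hji.trans k.castSucc_lt_succ).ne',
        Pi.single_eq_of_ne hji.ne', sub_zero]
  have hdiag : ∀ i : Fin (n + 1), gaps 0 (Pi.single i (1 : ℝ)) i = -1 := by
    intro i
    cases i using Fin.lastCases with
    | last => simp
    | cast k => simp [Pi.single_eq_of_ne k.castSucc_lt_succ.ne']
  rw [Matrix.det_of_isUpperTriangular htri]
  simp [LinearMap.toMatrix'_apply, gapsLinearMap, hdiag]

theorem measurePreserving_gaps (t : ℝ) :
    MeasurePreserving (gaps (n := n + 1) t) volume volume := by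
  have hdet : LinearMap.det (gapsLinearMap n) ≠ 0 := by simp [det_gapsLinearMap]
  have hlin : MeasurePreserving (gapsLinearMap n) volume volume := by
    refine ⟨(gapsLinearMap n).continuous_of_finiteDimensional.measurable, ?_⟩
    rw [Real.map_linearMap_volume_pi_eq_smul_volume_pi hdet, det_gapsLinearMap]
    simp
  have : gaps (n := n + 1) t = (· + Pi.single (Fin.last n) t) ∘ gapsLinearMap n := by
    ext s : 1
    exact gaps_eq_gaps_zero_add t s
  rw [this]
  exact (measurePreserving_add_right volume _).comp hlin

end Gaps

section HeatKernel

variable {d : ℕ} (μ : Measure (EuclideanSpace ℝ (Fin d)))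

theorem antitone_heatK : Antitone (heatK μ) := fun t t' htt' =>
  lintegral_mono fun ξ => ENNReal.ofReal_le_ofReal <| Real.exp_le_exp.2 <| by
    nlinarith [sq_nonneg ‖ξ‖]

theorem measurable_heatK : Measurable (heatK μ) := (antitone_heatK μ).measurable

noncomputable def laplaceHeatK (lam : ℝ) : ℝ≥0∞ :=
  ∫⁻ v in Ioi 0, ENNReal.ofReal (Real.exp (-lam * v)) * heatK μ v

theorem laplaceHeatK_eq_lintegral_inv [SFinite μ] {lam : ℝ} (hlam : 0 < lam) :
    laplaceHeatK μ lam = ∫⁻ ξ, ENNReal.ofReal ((lam + ‖ξ‖ ^ 2)⁻¹) ∂μ := by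
  calc laplaceHeatK μ lam
      = ∫⁻ v in Ioi 0, ∫⁻ ξ, ENNReal.ofReal (Real.exp (-(lam + ‖ξ‖ ^ 2) * v)) ∂μ := by
        refine lintegral_congr fun v => ?_
        rw [heatK, ← lintegral_const_mul' _ _ ENNReal.ofReal_ne_top]
        refine lintegral_congr fun ξ => ?_
        rw [← ENNReal.ofReal_mul (Real.exp_nonneg _), ← Real.exp_add]
        ring_nf
    _ = ∫⁻ ξ, (∫⁻ v in Ioi 0, ENNReal.ofReal (Real.exp (-(lam + ‖ξ‖ ^ 2) * v))) ∂μ :=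
        lintegral_lintegral_swap (Measurable.aemeasurable (by fun_prop))
    _ = ∫⁻ ξ, ENNReal.ofReal ((lam + ‖ξ‖ ^ 2)⁻¹) ∂μ :=
        lintegral_congr fun ξ => lintegral_Ioi_exp_neg_mul (by positivity)

theorem tendsto_laplaceHeatK_atTop
    (hDalang : ∫⁻ ξ, ENNReal.ofReal ((1 + ‖ξ‖ ^ 2)⁻¹) ∂μ < ⊤) :
    Tendsto (laplaceHeatK μ) atTop (𝓝 0) := by
  have : SigmaFinite μ := sigmaFinite_of_lintegral_ne_top (by fun_prop)
    (ae_of_all _ fun ξ => by simp only [ne_eq, ENNReal.ofReal_eq_zero, not_le]; positivity)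
    hDalang.ne
  have hlim : ∀ ξ : EuclideanSpace ℝ (Fin d),
      Tendsto (fun lam : ℝ => ENNReal.ofReal ((lam + ‖ξ‖ ^ 2)⁻¹)) atTop (𝓝 0) := fun ξ => by
    simpa using ENNReal.tendsto_ofReal
      (tendsto_inv_atTop_zero.comp (tendsto_atTop_add_const_right _ _ tendsto_id))
  have hdom : ∀ᶠ lam in atTop, ∀ ξ : EuclideanSpace ℝ (Fin d),
      ENNReal.ofReal ((lam + ‖ξ‖ ^ 2)⁻¹) ≤ ENNReal.ofReal ((1 + ‖ξ‖ ^ 2)⁻¹) :=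
    (eventually_ge_atTop 1).mono fun lam hlam ξ => ENNReal.ofReal_le_ofReal <|
      inv_anti₀ (by positivity) (by linarith)
  rw [← lintegral_zero]
  refine (tendsto_lintegral_filter_of_dominated_convergence _
    (Eventually.of_forall fun lam => by fun_prop) (hdom.mono fun _ h => ae_of_all _ h)
    hDalang.ne (ae_of_all _ hlim)).congr' ?_
  filter_upwards [eventually_gt_atTop 0] with lam hlam
  exact (laplaceHeatK_eq_lintegral_inv μ hlam).symm

def timeSimplex (m : ℕ) (t : ℝ) : Set (Fin (m + 1) → ℝ) :=
  {s : Fin (m + 1) → ℝ | StrictMono s ∧ 0 < s 0 ∧ s (Fin.last m) < t}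

theorem measurableSet_timeSimplex (m : ℕ) (t : ℝ) : MeasurableSet (timeSimplex m t) := by
  simp only [timeSimplex, Fin.strictMono_iff_lt_succ, ofPred_and, ofPred_forall]
  refine .inter (.iInter fun j => measurableSet_lt ?_ ?_) (.inter (measurableSet_lt ?_ ?_)
    (measurableSet_lt ?_ ?_)) <;> fun_prop

theorem hSeq_succ_eq_setLIntegral_gaps (m : ℕ) (t : ℝ) :
    hSeq μ (m + 1) t = ∫⁻ s in timeSimplex m t, ∏ j, heatK μ (gaps t s j) := by
  simp only [hSeq, timeSimplex, Fin.prod_univ_castSucc, gaps_castSucc, gaps_last]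

theorem hSeq_le_exp_mul_laplaceHeatK_pow {lam t : ℝ} (hlam : 0 ≤ lam) (ht : 0 ≤ t) (n : ℕ) :
    hSeq μ n t ≤ ENNReal.ofReal (Real.exp (lam * t)) * laplaceHeatK μ lam ^ n := by
  cases n with
  | zero => simpa [hSeq] using Real.one_le_exp (mul_nonneg hlam ht)
  | succ m =>
    set f : ℝ → ℝ≥0∞ := (Ioi 0).indicator fun v => ENNReal.ofReal (Real.exp (-lam * v)) * heatK μ v
    have hf : Measurable f := by
      refine Measurable.indicator ?_ measurableSet_Ioi
      exact Measurable.mul (by fun_prop) (measurable_heatK μ)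
    have hprod : ∀ u : Fin (m + 1) → ℝ, (∀ j, 0 < u j) →
        ∏ j, f (u j) = ENNReal.ofReal (Real.exp (-lam * ∑ j, u j)) * ∏ j, heatK μ (u j) := by
      intro u hu
      rw [Finset.mul_sum, Real.exp_sum,
        ENNReal.ofReal_prod_of_nonneg fun _ _ => (Real.exp_pos _).le, ← Finset.prod_mul_distrib]
      exact Finset.prod_congr rfl fun j _ => indicator_of_mem (hu j) _
    have hpt : ∀ s ∈ timeSimplex m t,
        ∏ j, heatK μ (gaps t s j) ≤ ENNReal.ofReal (Real.exp (lam * t)) * ∏ j, f (gaps t s j) := by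
      rintro s ⟨hs, hs0, hst⟩
      rw [hprod _ (gaps_pos hs hst), sum_gaps, ← mul_assoc,
        ← ENNReal.ofReal_mul (Real.exp_pos _).le, ← Real.exp_add]
      exact le_mul_of_one_le_left' (ENNReal.one_le_ofReal.2 (Real.one_le_exp (by nlinarith)))
    calc hSeq μ (m + 1) t
        = ∫⁻ s in timeSimplex m t, ∏ j, heatK μ (gaps t s j) :=
          hSeq_succ_eq_setLIntegral_gaps μ m t
      _ ≤ ∫⁻ s in timeSimplex m t, ENNReal.ofReal (Real.exp (lam * t)) * ∏ j, f (gaps t s j) :=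
          setLIntegral_mono' (measurableSet_timeSimplex m t) hpt
      _ ≤ ∫⁻ s, ENNReal.ofReal (Real.exp (lam * t)) * ∏ j, f (gaps t s j) :=
          setLIntegral_le_lintegral _ _
      _ = ENNReal.ofReal (Real.exp (lam * t)) * ∫⁻ u : Fin (m + 1) → ℝ, ∏ j, f (u j) := by
          rw [lintegral_const_mul' _ _ ENNReal.ofReal_ne_top]
          exact congrArg _ <| (measurePreserving_gaps t).lintegral_comp
            (Finset.measurable_prod _ fun j _ => hf.comp (measurable_pi_apply j))
      _ = ENNReal.ofReal (Real.exp (lam * t)) * laplaceHeatK μ lam ^ (m + 1) := by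
          rw [volume_pi, lintegral_pi_prod_eq_pow volume hf, lintegral_indicator measurableSet_Ioi]
          rfl

end HeatKernel

theorem ENNReal.tsum_rpow_lt_top_of_le_mul_pow {a : ℕ → ℝ≥0∞} {C q : ℝ≥0∞} {p : ℝ}
    (hC : C ≠ ∞) (hq : q < 1) (hp : 0 < p) (h : ∀ n, a n ≤ C * q ^ n) :
    ∑' n, a n ^ p < ∞ := by
  have hterm : ∀ n, a n ^ p ≤ C ^ p * (q ^ p) ^ n := fun n =>
    calc a n ^ p ≤ (C * q ^ n) ^ p := ENNReal.rpow_le_rpow (h n) hp.le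
      _ = C ^ p * (q ^ p) ^ n := by
        rw [ENNReal.mul_rpow_of_nonneg _ _ hp.le, ← ENNReal.rpow_natCast_mul, mul_comm (n : ℝ),
          ENNReal.rpow_mul_natCast]
  calc ∑' n, a n ^ p ≤ ∑' n, C ^ p * (q ^ p) ^ n := ENNReal.tsum_le_tsum hterm
    _ = C ^ p * (1 - q ^ p)⁻¹ := by rw [ENNReal.tsum_mul_left, ENNReal.tsum_geometric]
    _ < ∞ := ENNReal.mul_lt_top (ENNReal.rpow_lt_top_of_nonneg hp.le hC)
        (ENNReal.inv_lt_top.2 (tsub_pos_of_lt (ENNReal.rpow_lt_one hq hp)))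

theorem H_tilde_series_converges_general (d : ℕ)
    (μ : Measure (EuclideanSpace ℝ (Fin d)))
    (hDalang : ∫⁻ ξ, ENNReal.ofReal ((1 + ‖ξ‖ ^ 2)⁻¹) ∂μ < ⊤) :
    ∀ t γ : ℝ, 0 < t → 0 < γ →
      (∑' n : ℕ, ((ENNReal.ofReal γ) ^ n * hSeq μ n t) ^ (1 / 2 : ℝ)) < ⊤ := by
  intro t γ ht hγ
  have hγ0 : ENNReal.ofReal γ ≠ 0 := by simpa using hγ
  have hγ_inv : 0 < (ENNReal.ofReal γ)⁻¹ := ENNReal.inv_pos.2 ENNReal.ofReal_ne_top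
  obtain ⟨lam, hK, hlam⟩ := (((tendsto_laplaceHeatK_atTop μ hDalang).eventually
    (gt_mem_nhds hγ_inv)).and (eventually_ge_atTop 0)).exists
  have hq : ENNReal.ofReal γ * laplaceHeatK μ lam < 1 := by
    simpa [ENNReal.mul_inv_cancel hγ0 ENNReal.ofReal_ne_top] using
      (ENNReal.mul_lt_mul_iff_right hγ0 ENNReal.ofReal_ne_top).2 hK
  refine ENNReal.tsum_rpow_lt_top_of_le_mul_pow
    (ENNReal.ofReal_ne_top (r := Real.exp (lam * t))) hq (by norm_num) fun n => ?_
  calc ENNReal.ofReal γ ^ n * hSeq μ n t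
      ≤ ENNReal.ofReal γ ^ n * (ENNReal.ofReal (Real.exp (lam * t)) * laplaceHeatK μ lam ^ n) :=
        mul_le_mul_right (hSeq_le_exp_mul_laplaceHeatK_pow μ hlam ht.le n) _
    _ = ENNReal.ofReal (Real.exp (lam * t)) * (ENNReal.ofReal γ * laplaceHeatK μ lam) ^ n := by
        ring

/-- Under Dalang's condition, `H̃(t;γ) = ∑_n √(γ^n h_n(t)) < ∞` for all `t > 0`, `γ > 0`. -/
theorem H_tilde_series_converges (d : ℕ) (hd : 1 ≤ d)
    (μ : Measure (EuclideanSpace ℝ (Fin d)))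
    (hDalang : ∫⁻ ξ, ENNReal.ofReal ((1 + ‖ξ‖ ^ 2)⁻¹) ∂μ < ⊤) :
    ∀ t γ : ℝ, 0 < t → 0 < γ →
      (∑' n : ℕ, ((ENNReal.ofReal γ) ^ n * hSeq μ n t) ^ (1 / 2 : ℝ)) < ⊤ :=
  H_tilde_series_converges_general d μ hDalang
end

section
/- For every integer n ≥ 0, the function t ↦ h_n(t) is nondecreasing on (0,∞): if 0 < s ≤ t then h_n(s) ≤ h_n(t). -/
/-!
The integrand of `h_n` depends on the times only through their consecutive differences and the
distance to the endpoint. Translating all times by `t - s` therefore turns `h_n(s)` into the integral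
of the integrand of `h_n(t)` over `{t - s < t_1 < ⋯ < t_n < t}`, a subset of
`{0 < t_1 < ⋯ < t_n < t}`; nonnegativity of the integrand does the rest.
-/

open MeasureTheory Real ENNReal

noncomputable def chainKernel {m : ℕ} (k : ℝ → ℝ≥0∞) (t : ℝ) (u : Fin (m + 1) → ℝ) : ℝ≥0∞ :=
  (∏ j : Fin m, k (u j.succ - u j.castSucc)) * k (t - u (Fin.last m))

def orderedSimplex (m : ℕ) (a b : ℝ) : Set (Fin (m + 1) → ℝ) :=
  {u | StrictMono u ∧ a < u 0 ∧ u (Fin.last m) < b}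

lemma chainKernel_add_const {m : ℕ} (k : ℝ → ℝ≥0∞) (t c : ℝ) (u : Fin (m + 1) → ℝ) :
    chainKernel k (t + c) (u + fun _ => c) = chainKernel k t u := by
  simp only [chainKernel, Pi.add_apply, add_sub_add_right_eq_sub]

lemma preimage_add_const_orderedSimplex (m : ℕ) (a b c : ℝ) :
    (· + fun _ => c) ⁻¹' orderedSimplex m (a + c) (b + c) = orderedSimplex m a b := by
  ext u
  simp only [orderedSimplex, Set.mem_preimage, Set.mem_ofPred_eq, Pi.add_apply, add_lt_add_iff_right]
  rw [show StrictMono (u + fun _ => c) ↔ StrictMono u from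
    ⟨fun h _ _ hij => by simpa using h hij, fun h _ _ hij => by simpa using h hij⟩]

lemma orderedSimplex_mono {m : ℕ} {a a' b b' : ℝ} (ha : a' ≤ a) (hb : b ≤ b') :
    orderedSimplex m a b ⊆ orderedSimplex m a' b' :=
  fun _ ⟨hu, h0, hlast⟩ => ⟨hu, ha.trans_lt h0, hlast.trans_le hb⟩

lemma setLIntegral_chainKernel_orderedSimplex_add_const (m : ℕ) (k : ℝ → ℝ≥0∞) (a b t c : ℝ) :
    ∫⁻ u in orderedSimplex m (a + c) (b + c), chainKernel k (t + c) u
      = ∫⁻ u in orderedSimplex m a b, chainKernel k t u := by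
  have hshift := measurePreserving_add_right (volume : Measure (Fin (m + 1) → ℝ)) fun _ => c
  have hemb := (MeasurableEquiv.addRight fun _ : Fin (m + 1) => c).measurableEmbedding
  rw [← hshift.setLIntegral_comp_preimage_emb hemb, preimage_add_const_orderedSimplex]
  simp only [chainKernel_add_const]

lemma hSeq_succ {d : ℕ} (μ : Measure (EuclideanSpace ℝ (Fin d))) (m : ℕ) (t : ℝ) :
    hSeq μ (m + 1) t = ∫⁻ u in orderedSimplex m 0 t, chainKernel (heatK μ) t u :=
  rfl

theorem hSeq_mono_general (d : ℕ) (μ : Measure (EuclideanSpace ℝ (Fin d))) (n : ℕ) :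
    ∀ s t : ℝ, 0 < s → s ≤ t → hSeq μ n s ≤ hSeq μ n t := by
  intro s t _ hst
  cases n with
  | zero => exact le_rfl
  | succ m =>
    have hshift := setLIntegral_chainKernel_orderedSimplex_add_const m (heatK μ) 0 s s (t - s)
    rw [zero_add, add_sub_cancel] at hshift
    rw [hSeq_succ, hSeq_succ, ← hshift]
    exact lintegral_mono_set (orderedSimplex_mono (sub_nonneg.2 hst) le_rfl)

/-- For every `n`, the function `t ↦ h_n(t)` is nondecreasing on `(0,∞)`. -/
theorem hSeq_mono (d : ℕ) (hd : 1 ≤ d) (μ : Measure (EuclideanSpace ℝ (Fin d))) (n : ℕ) :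
    ∀ s t : ℝ, 0 < s → s ≤ t → hSeq μ n s ≤ hSeq μ n t :=
  hSeq_mono_general d μ n
end
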